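/- arXiv:2201.08774 — 3 statements merged into one kernel-verified Lean document; each statement's English description precedes it below -/
import Mathlib

section
/- If man m pushes up a set X of women ranked below his DA partner μ(m) and incurs regret (i.e., μ(m) >_m μ^X(m) where μ^X is the new DA matching), then m's new partner belongs to X. -/
/-- A stable marriage profile: `M m` is man `m`'s ranking of women
(`M m k` = his `k`-th favorite woman), `W w` is woman `w`'s ranking of men. -/
structure Profile (n : ℕ) where
  M : Fin n → (Fin n ≃ Fin n)
  W : Fin n → (Fin n ≃ Fin n)

/-- Man `m` strictly prefers woman `w₁` to woman `w₂`. -/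
def Profile.mpref {n : ℕ} (P : Profile n) (m w₁ w₂ : Fin n) : Prop :=
  (P.M m).symm w₁ < (P.M m).symm w₂

/-- Woman `w` strictly prefers man `m₁` to man `m₂`. -/
def Profile.wpref {n : ℕ} (P : Profile n) (w m₁ m₂ : Fin n) : Prop :=
  (P.W w).symm m₁ < (P.W w).symm m₂

/-- State of the Gale–Shapley (deferred acceptance) algorithm:
`next m` is the rank of the next woman `m` will propose to, `wmatch w` is the man
currently (tentatively) held by woman `w`, `props` records all proposals made so far. -/
structure GSState (n : ℕ) where
  next : Fin n → ℕ
  wmatch : Fin n → Option (Fin n)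
  props : List (Fin n × Fin n)

/-- Man `m` is currently not held by any woman. -/
def isUnmatched {n : ℕ} (s : GSState n) (m : Fin n) : Bool :=
  decide (∀ w, s.wmatch w ≠ some m)

/-- One step of men-proposing deferred acceptance: the first unmatched man
proposes to the next woman on his list; she keeps her favorite proposer so far. -/
def GSstep {n : ℕ} (P : Profile n) (s : GSState n) : GSState n :=
  match (List.finRange n).find? (fun m => isUnmatched s m && decide (s.next m < n)) with
  | none => s
  | some m =>
    if h : s.next m < n then
      let w := P.M m ⟨s.next m, h⟩
      let s' : GSState n :=
        { next := Function.update s.next m (s.next m + 1),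
          wmatch := s.wmatch,
          props := (m, w) :: s.props }
      match s.wmatch w with
      | none => { s' with wmatch := Function.update s.wmatch w (some m) }
      | some m' =>
          if (P.W w).symm m < (P.W w).symm m' then
            { s' with wmatch := Function.update s.wmatch w (some m) }
          else s'
    else s

def GSinit (n : ℕ) : GSState n := ⟨fun _ => 0, fun _ => none, []⟩

/-- Run deferred acceptance to completion (at most `n*n` proposals occur). -/
def GSrun {n : ℕ} (P : Profile n) : GSState n := (GSstep P)^[n * n + 1] (GSinit n)

/-- The men-proposing deferred acceptance matching, as a map from men to women. -/
noncomputable def DA {n : ℕ} (P : Profile n) : Fin n → Fin n :=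
  fun m => if h : ∃ w, (GSrun P).wmatch w = some m then h.choose else m

/-- Man `m` proposes to woman `w` during the run of deferred acceptance on `P`. -/
def Proposes {n : ℕ} (P : Profile n) (m w : Fin n) : Prop :=
  (m, w) ∈ (GSrun P).props

/-- `(m, w)` is a blocking pair for the matching `μ` (men to women) w.r.t. profile `P`. -/
def Blocks {n : ℕ} (P : Profile n) (μ : Fin n → Fin n) (m w : Fin n) : Prop :=
  P.mpref m w (μ m) ∧ ∃ m', μ m' = w ∧ P.wpref w m m'

/-- `μ` is a stable matching with respect to profile `P`. -/
def Stable {n : ℕ} (P : Profile n) (μ : Fin n → Fin n) : Prop :=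
  Function.Bijective μ ∧ ∀ m w, ¬ Blocks P μ m w

/-- Replace man `m`'s preference list by `e`. -/
def Profile.updateM {n : ℕ} (P : Profile n) (m : Fin n) (e : Fin n ≃ Fin n) : Profile n :=
  { P with M := Function.update P.M m e }

/-- Replace woman `w`'s preference list by `e`. -/
def Profile.updateW {n : ℕ} (P : Profile n) (w : Fin n) (e : Fin n ≃ Fin n) : Profile n :=
  { P with W := Function.update P.W w e }

/-- The set of women ranked strictly above `w₀` in the list `e`. -/
def Above {n : ℕ} (e : Fin n ≃ Fin n) (w₀ : Fin n) : Set (Fin n) :=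
  {w | e.symm w < e.symm w₀}

/-- The set of women ranked strictly below `w₀` in the list `e`. -/
def Below {n : ℕ} (e : Fin n ≃ Fin n) (w₀ : Fin n) : Set (Fin n) :=
  {w | e.symm w₀ < e.symm w}

/-- `e'` is obtained from man `m`'s true list by pushing up the set `X` and pushing
down the set `Y` around the pivot `DA P m` (the order of women above and below
the pivot is immaterial, cf. Proposition 2 of the paper). -/
def PushUpDown {n : ℕ} (P : Profile n) (m : Fin n) (X Y : Set (Fin n))
    (e' : Fin n ≃ Fin n) : Prop :=
  Above e' (DA P m) = (Above (P.M m) (DA P m) ∪ X) \ Y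

/-- `e'` is obtained from `m`'s true list by pushing up the set `X` above `DA P m`. -/
def PushUp {n : ℕ} (P : Profile n) (m : Fin n) (X : Set (Fin n))
    (e' : Fin n ≃ Fin n) : Prop :=
  PushUpDown P m X ∅ e'

/-- `e'` is obtained from `m`'s true list by pushing down the set `Y` below `DA P m`. -/
def PushDown {n : ℕ} (P : Profile n) (m : Fin n) (Y : Set (Fin n))
    (e' : Fin n ≃ Fin n) : Prop :=
  PushUpDown P m ∅ Y e'

/-- Woman `w` is ranked below `DA P m` in `m`'s true list, and pushing her up
individually leaves `m`'s deferred acceptance partner unchanged (no regret). -/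
def NoRegretWoman {n : ℕ} (P : Profile n) (m w : Fin n) : Prop :=
  w ∈ Below (P.M m) (DA P m) ∧
    ∀ e' : Fin n ≃ Fin n, PushUp P m {w} e' → DA (P.updateM m e') m = DA P m

/-- The no-regret set `W^NR` of accomplice `m`. -/
def WNR {n : ℕ} (P : Profile n) (m : Fin n) : Set (Fin n) :=
  {w | NoRegretWoman P m w}

/-!
Let `μ = DA P`, a stable matching for `P`, and run deferred acceptance on the profile in which
`m` reports `e'`. While `m` is unmatched he has not yet proposed to `μ m`. Otherwise, the men who
have proposed to their `μ`-partner but are not held by her inject (via `μ`) into the women who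
hold a man they prefer to their `μ`-partner, and by stability of `μ` these women inject (via the
man they hold) back into those men other than `m`, which is absurd. So `m`'s new partner is weakly
`e'`-above `μ m`; with regret it differs from `μ m`, hence lies in
`Above e' (μ m) = Above (P.M m) (μ m) ∪ X`, and regret rules out the first set.
-/

open Function

namespace GSState

variable {n : ℕ} (Q : Profile n) (s : GSState n)

def Proposed (p w : Fin n) : Prop :=
  ((Q.M p).symm w : ℕ) < s.next p

def propose (p : Fin n) (hp : s.next p < n) : GSState n :=
  let w := Q.M p ⟨s.next p, hp⟩
  { next := update s.next p (s.next p + 1)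
    wmatch := match s.wmatch w with
      | none => update s.wmatch w (some p)
      | some h => if (Q.W w).symm p < (Q.W w).symm h then update s.wmatch w (some p) else s.wmatch
    props := (p, w) :: s.props }

theorem GSstep_cases :
    (GSstep Q s = s ∧ ∀ p, (∀ w, s.wmatch w ≠ some p) → n ≤ s.next p) ∨
      ∃ p hp, (∀ w, s.wmatch w ≠ some p) ∧ GSstep Q s = s.propose Q p hp := by
  rcases hfind : (List.finRange n).find? (fun p => isUnmatched s p && decide (s.next p < n))
    with _ | p
  · refine .inl ⟨by rw [GSstep, hfind], fun p hun => ?_⟩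
    simpa [isUnmatched, hun] using List.find?_eq_none.mp hfind p (List.mem_finRange p)
  · have hp := List.find?_some hfind
    simp only [Bool.and_eq_true, decide_eq_true_eq, isUnmatched] at hp
    refine .inr ⟨p, hp.2, hp.1, ?_⟩
    rw [GSstep, hfind]
    dsimp only
    rw [dif_pos hp.2, propose]
    rcases s.wmatch (Q.M p ⟨s.next p, hp.2⟩) with _ | h
    · rfl
    · dsimp only
      split_ifs <;> rfl

variable {Q s}

theorem proposed_propose_iff {p : Fin n} (hp : s.next p < n) {q w : Fin n} :
    (s.propose Q p hp).Proposed Q q w ↔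
      s.Proposed Q q w ∨ (q = p ∧ w = Q.M p ⟨s.next p, hp⟩) := by
  rcases eq_or_ne q p with rfl | hq
  · simp only [Proposed, propose, update_self, true_and, ← Equiv.symm_apply_eq, Fin.ext_iff]
    omega
  · simp only [Proposed, propose, update_of_ne hq, hq, false_and, or_false]

theorem wmatch_propose {p w : Fin n} (hp : s.next p < n) (hw : Q.M p ⟨s.next p, hp⟩ = w) :
    ∃ h, (s.propose Q p hp).wmatch = update s.wmatch w (some h) ∧
      (h = p ∨ s.wmatch w = some h) ∧ (Q.W w).symm h ≤ (Q.W w).symm p ∧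
      ∀ h₀, s.wmatch w = some h₀ → (Q.W w).symm h ≤ (Q.W w).symm h₀ := by
  subst hw
  simp only [propose]
  rcases hw : s.wmatch (Q.M p ⟨s.next p, hp⟩) with _ | h₀
  · exact ⟨p, rfl, .inl rfl, le_rfl, by simp⟩
  · dsimp only
    split_ifs with hlt
    · exact ⟨p, rfl, .inl rfl, le_rfl, by simpa using hlt.le⟩
    · exact ⟨h₀, (update_eq_self_iff.mpr hw.symm).symm, .inr rfl, not_lt.mp hlt, by simp⟩

structure Inv (Q : Profile n) (s : GSState n) : Prop where
  next_le : ∀ p, s.next p ≤ n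
  wmatch_injective : ∀ {w w' p}, s.wmatch w = some p → s.wmatch w' = some p → w = w'
  proposed_of_wmatch : ∀ {w p}, s.wmatch w = some p → s.Proposed Q p w
  exists_wmatch_of_proposed : ∀ {p w}, s.Proposed Q p w →
    ∃ h, s.wmatch w = some h ∧ (Q.W w).symm h ≤ (Q.W w).symm p

theorem inv_init : (GSinit n).Inv Q where
  next_le _ := Nat.zero_le n
  wmatch_injective h := nomatch h
  proposed_of_wmatch h := nomatch h
  exists_wmatch_of_proposed h := nomatch h

theorem Inv.propose (hs : s.Inv Q) {p : Fin n} (hun : ∀ w, s.wmatch w ≠ some p)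
    (hp : s.next p < n) : (s.propose Q p hp).Inv Q := by
  set w := Q.M p ⟨s.next p, hp⟩ with hw
  obtain ⟨h, hwm, hnew, hle_p, hle_old⟩ := wmatch_propose hp hw.symm
  have holder : ∀ {x q}, (s.propose Q p hp).wmatch x = some q →
      s.wmatch x = some q ∨ (x = w ∧ q = p) := by
    intro x q hxq
    rcases eq_or_ne x w with rfl | hx
    · rw [hwm, update_self, Option.some_inj] at hxq
      subst hxq
      exact hnew.elim (fun hp => .inr ⟨rfl, hp⟩) .inl
    · rw [hwm, update_of_ne hx] at hxq
      exact .inl hxq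
  refine ⟨fun q => ?_, fun h₁ h₂ => ?_, fun hxq => ?_, @fun q x hprop => ?_⟩
  · rcases eq_or_ne q p with rfl | hq
    · simpa [GSState.propose] using hp
    · simpa [GSState.propose, update_of_ne hq] using hs.next_le q
  · rcases holder h₁ with h₁ | ⟨rfl, rfl⟩ <;> rcases holder h₂ with h₂ | ⟨rfl, hq⟩
    · exact hs.wmatch_injective h₁ h₂
    · exact absurd h₁ (hq ▸ hun _)
    · exact absurd h₂ (hun _)
    · rfl
  · rw [proposed_propose_iff]
    exact (holder hxq).imp hs.proposed_of_wmatch (fun hxq => ⟨hxq.2, hxq.1⟩)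
  · rw [proposed_propose_iff] at hprop
    rcases eq_or_ne x w with rfl | hx
    · refine ⟨h, by rw [hwm, update_self], ?_⟩
      rcases hprop with hprop | ⟨rfl, -⟩
      · obtain ⟨h₀, hh₀, hle⟩ := hs.exists_wmatch_of_proposed hprop
        exact (hle_old h₀ hh₀).trans hle
      · exact hle_p
    · rw [hwm, update_of_ne hx]
      exact hs.exists_wmatch_of_proposed (hprop.resolve_right fun h => hx h.2)

end GSState

open GSState

section Run

variable {n : ℕ} (Q : Profile n)

theorem inv_iterate (k : ℕ) : ((GSstep Q)^[k] (GSinit n)).Inv Q := by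
  induction k with
  | zero => exact inv_init
  | succ k ih =>
    rw [iterate_succ_apply']
    rcases GSstep_cases Q _ with ⟨heq, -⟩ | ⟨p, hp, hun, heq⟩
    · rwa [heq]
    · rw [heq]
      exact ih.propose hun hp

theorem inv_GSrun : (GSrun Q).Inv Q := inv_iterate Q _

theorem GSstep_eq_self_or_sum_next (s : GSState n) :
    GSstep Q s = s ∨ ∑ q, (GSstep Q s).next q = ∑ q, s.next q + 1 := by
  rcases GSstep_cases Q s with ⟨heq, -⟩ | ⟨p, hp, -, heq⟩
  · exact .inl heq
  · right
    rw [heq]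
    simp only [GSState.propose, Finset.sum_update_of_mem (Finset.mem_univ p),
      Finset.sum_eq_add_sum_sdiff_singleton_of_mem (Finset.mem_univ p) s.next]
    ring

theorem GSstep_iterate_fixed_or_le_sum_next (k : ℕ) :
    GSstep Q ((GSstep Q)^[k] (GSinit n)) = (GSstep Q)^[k] (GSinit n) ∨
      k ≤ ∑ q, ((GSstep Q)^[k] (GSinit n)).next q := by
  induction k with
  | zero => exact .inr (Nat.zero_le _)
  | succ k ih =>
    rw [iterate_succ_apply']
    rcases ih with hfix | hle
    · rw [hfix]
      exact .inl hfix
    rcases GSstep_eq_self_or_sum_next Q ((GSstep Q)^[k] (GSinit n)) with heq | hsum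
    · rw [heq]
      exact .inl heq
    · exact .inr (by omega)

theorem GSstep_GSrun : GSstep Q (GSrun Q) = GSrun Q := by
  have hbound : ∑ q, (GSrun Q).next q ≤ n * n := by
    simpa using Finset.sum_le_card_nsmul Finset.univ _ n fun q _ => (inv_GSrun Q).next_le q
  exact (GSstep_iterate_fixed_or_le_sum_next Q (n * n + 1)).resolve_right
    (by rw [GSrun] at hbound; omega)

theorem next_GSrun_of_unmatched {p : Fin n} (hun : ∀ w, (GSrun Q).wmatch w ≠ some p) :
    (GSrun Q).next p = n := by
  rcases GSstep_cases Q (GSrun Q) with ⟨-, hdone⟩ | ⟨q, hq, -, heq⟩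
  · exact le_antisymm ((inv_GSrun Q).next_le p) (hdone p hun)
  · have := congrFun (congrArg GSState.next ((GSstep_GSrun Q).symm.trans heq)) q
    simp [GSState.propose] at this

theorem exists_wmatch_GSrun (p : Fin n) : ∃ w, (GSrun Q).wmatch w = some p := by
  by_contra! hun
  have hheld : ∀ w, ∃ h, (GSrun Q).wmatch w = some h := fun w =>
    ((inv_GSrun Q).exists_wmatch_of_proposed (p := p) (by
      simp [Proposed, next_GSrun_of_unmatched Q hun])).imp fun _ => And.left
  choose f hf using hheld
  have hf_inj : Injective f := fun w w' h => (inv_GSrun Q).wmatch_injective (hf w) (h ▸ hf w')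
  obtain ⟨w, rfl⟩ := Finite.injective_iff_surjective.mp hf_inj p
  exact hun w (hf w)

theorem wmatch_GSrun_DA (p : Fin n) : (GSrun Q).wmatch (DA Q p) = some p := by
  have h := exists_wmatch_GSrun Q p
  simp only [DA, dif_pos h]
  exact h.choose_spec

theorem DA_injective : Injective (DA Q) := fun p q h =>
  Option.some_inj.mp ((wmatch_GSrun_DA Q p).symm.trans (h ▸ wmatch_GSrun_DA Q q))

theorem stable_DA : Stable Q (DA Q) := by
  refine ⟨Finite.injective_iff_bijective.mp (DA_injective Q), ?_⟩
  rintro p w ⟨hpw, q, rfl, hpref⟩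
  have hprop : (GSrun Q).Proposed Q p (DA Q q) :=
    lt_trans (Fin.lt_def.mp hpw) ((inv_GSrun Q).proposed_of_wmatch (wmatch_GSrun_DA Q p))
  obtain ⟨h, hh, hle⟩ := (inv_GSrun Q).exists_wmatch_of_proposed hprop
  rw [wmatch_GSrun_DA, Option.some_inj] at hh
  subst hh
  exact absurd hpref (not_lt.mpr hle)

end Run

section Manipulation

variable {n : ℕ}

@[simp]
theorem Profile.updateM_M_self (P : Profile n) (m : Fin n) (e : Fin n ≃ Fin n) :
    (P.updateM m e).M m = e := by
  simp [Profile.updateM]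

theorem Profile.updateM_M_of_ne (P : Profile n) {m p : Fin n} (e : Fin n ≃ Fin n) (hp : p ≠ m) :
    (P.updateM m e).M p = P.M p := by
  simp [Profile.updateM, hp]

theorem next_iterate_le_succ_of_unmatched {Q : Profile n} {m : Fin n} {r : ℕ}
    (hr : ∀ k, (∀ w, ((GSstep Q)^[k] (GSinit n)).wmatch w ≠ some m) →
      ((GSstep Q)^[k] (GSinit n)).next m ≤ r) (k : ℕ) :
    ((GSstep Q)^[k] (GSinit n)).next m ≤ r + 1 := by
  induction k with
  | zero => exact Nat.zero_le _
  | succ k ih =>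
    rw [iterate_succ_apply']
    rcases GSstep_cases Q ((GSstep Q)^[k] (GSinit n)) with ⟨heq, -⟩ | ⟨p, hp, hun, heq⟩
    · rwa [heq]
    rw [heq]
    rcases eq_or_ne m p with rfl | hmp
    · simpa [GSState.propose] using hr k hun
    · simpa [GSState.propose, update_of_ne hmp] using ih

variable {P : Profile n} {μ : Fin n → Fin n} {m : Fin n} {e : Fin n ≃ Fin n} {s : GSState n}

theorem proposed_partner_of_wmatch (hμ : Stable P μ) (hs : s.Inv (P.updateM m e))
    {w h q : Fin n} (hw : s.wmatch w = some h) (hhm : h ≠ m) (hq : μ q = w)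
    (hpref : P.wpref w h q) :
    s.Proposed (P.updateM m e) h (μ h) ∧ s.wmatch (μ h) ≠ some h := by
  have hne : μ h ≠ w := by
    rintro rfl
    obtain rfl := hμ.1.1 hq
    exact lt_irrefl _ hpref
  have hpartner : P.mpref h (μ h) w := by
    rcases lt_trichotomy ((P.M h).symm w) ((P.M h).symm (μ h)) with hlt | heq | hgt
    · exact absurd ⟨hlt, q, hq, hpref⟩ (hμ.2 h w)
    · exact absurd ((P.M h).symm.injective heq).symm hne
    · exact hgt
  refine ⟨?_, fun hh => hne (hs.wmatch_injective hh hw)⟩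
  have hproposed := hs.proposed_of_wmatch hw
  rw [Proposed, P.updateM_M_of_ne e hhm] at hproposed ⊢
  exact lt_trans hpartner hproposed

theorem not_proposed_partner_of_unmatched (hμ : Stable P μ) (hs : s.Inv (P.updateM m e))
    (hm : ∀ w, s.wmatch w ≠ some m) : ¬ s.Proposed (P.updateM m e) m (μ m) := by
  classical
  intro hprop
  set D := Finset.univ.filter fun p =>
    s.Proposed (P.updateM m e) p (μ p) ∧ s.wmatch (μ p) ≠ some p
  set E := Finset.univ.filter fun w => ∃ h q, s.wmatch w = some h ∧ μ q = w ∧ P.wpref w h q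
  have hmD : m ∈ D := by simpa [D] using ⟨hprop, hm (μ m)⟩
  have hDE : D.card ≤ E.card := by
    refine Finset.card_le_card_of_injOn μ (fun p hp => ?_) hμ.1.1.injOn
    simp only [D, Finset.mem_coe, Finset.mem_filter, Finset.mem_univ, true_and] at hp
    obtain ⟨h, hh, hle⟩ := hs.exists_wmatch_of_proposed hp.1
    have hhp : h ≠ p := fun he => hp.2 (he ▸ hh)
    simpa [E] using ⟨h, hh, p, rfl, lt_of_le_of_ne hle ((Equiv.injective _).ne hhp)⟩
  have hED : E.card ≤ (D.erase m).card := by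
    refine Finset.card_le_card_of_injOn (fun w => (s.wmatch w).getD m) (fun w hw => ?_) ?_
    · simp only [E, Finset.mem_coe, Finset.mem_filter, Finset.mem_univ, true_and] at hw
      obtain ⟨h, q, hh, hq, hpref⟩ := hw
      have hhm : h ≠ m := fun he => hm w (he ▸ hh)
      simpa [D, hh, hhm] using proposed_partner_of_wmatch hμ hs hh hhm hq hpref
    · intro w hw w' hw' hww'
      simp only [E, Finset.mem_coe, Finset.mem_filter, Finset.mem_univ, true_and] at hw hw'
      obtain ⟨h, -, hh, -⟩ := hw
      obtain ⟨h', -, hh', -⟩ := hw'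
      simp only [hh, hh', Option.getD_some] at hww'
      exact hs.wmatch_injective hh (hww' ▸ hh')
  rw [Finset.card_erase_of_mem hmD] at hED
  have := Finset.card_pos.mpr ⟨m, hmD⟩
  omega

theorem DA_updateM_rank_le (hμ : Stable P μ) :
    e.symm (DA (P.updateM m e) m) ≤ e.symm (μ m) := by
  have hnext := next_iterate_le_succ_of_unmatched (Q := P.updateM m e) (m := m)
    (r := e.symm (μ m)) (fun k hun => by
      simpa [Proposed] using not_proposed_partner_of_unmatched hμ (inv_iterate _ k) hun)
    (n * n + 1)
  have hheld := (inv_GSrun (P.updateM m e)).proposed_of_wmatch (wmatch_GSrun_DA _ m)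
  simp only [Proposed, Profile.updateM_M_self] at hheld
  rw [GSrun] at hheld
  rw [Fin.le_def]
  omega

end Manipulation

theorem withRegret_pushUp_partner_in_X_general (n : ℕ) (P : Profile n) (m : Fin n)
    (X : Set (Fin n))
    (e' : Fin n ≃ Fin n) (hpu : PushUp P m X e')
    (hregret : P.mpref m (DA P m) (DA (P.updateM m e') m)) :
    DA (P.updateM m e') m ∈ X := by
  have hne : DA (P.updateM m e') m ≠ DA P m := fun h => lt_irrefl _ (h ▸ hregret)
  have habove : DA (P.updateM m e') m ∈ Above e' (DA P m) :=
    lt_of_le_of_ne (DA_updateM_rank_le (stable_DA P)) (e'.symm.injective.ne hne)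
  rw [PushUp, PushUpDown, Set.sdiff_empty] at hpu
  rw [hpu] at habove
  exact habove.resolve_left fun hup => lt_asymm hup hregret

/-- If a push-up of the set `X` causes regret for man `m`, then
his new DA partner belongs to `X`. -/
theorem withRegret_pushUp_partner_in_X (n : ℕ) (P : Profile n) (m : Fin n)
    (X : Set (Fin n)) (hX : X ⊆ Below (P.M m) (DA P m))
    (e' : Fin n ≃ Fin n) (hpu : PushUp P m X e')
    (hregret : P.mpref m (DA P m) (DA (P.updateM m e') m)) :
    DA (P.updateM m e') m ∈ X :=
  withRegret_pushUp_partner_in_X_general n P m X e' hpu hregret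
end

section
/- If man m can push up a set X of women below his DA partner without incurring regret, then for every woman w_x ∈ X, pushing up w_x alone also does not cause m to incur regret. -/
/-!
Let `Q` be the profile in which `m` reports `e'`, so that `DA Q m = DA P m =: w₀`, and let `Q'` be
`Q` with `m`'s list replaced by `ex`. Every woman that `ex` ranks above `w₀` is ranked above `w₀` by
`e'` as well, so `DA Q` is still stable for `Q'`, and man-optimality of deferred acceptance gives
`m` at least `w₀` under `Q'`. Had he strictly more, his `Q'`-partner would be above `w₀` in `e'`
too: reporting `ex` would then be a profitable manipulation for `m` at `Q`, which the
strategy-proofness of deferred acceptance for men (Dubins–Freedman, via the blocking lemma of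
Gale and Sotomayor) rules out.
-/

namespace StableMarriage

variable {n : ℕ}

def mrank (Q : Profile n) (a b : Fin n) : ℕ := (Q.M a).symm b

lemma mrank_lt (Q : Profile n) (a b : Fin n) : mrank Q a b < n := ((Q.M a).symm b).isLt

lemma eq_of_mrank_eq {Q : Profile n} {a b c : Fin n} (h : mrank Q a b = mrank Q a c) : b = c :=
  (Q.M a).symm.injective (Fin.val_injective h)

lemma mpref_iff_mrank_lt {Q : Profile n} {a b c : Fin n} :
    Q.mpref a b c ↔ mrank Q a b < mrank Q a c :=
  Iff.rfl

lemma wpref_of_not_wpref {Q : Profile n} {w a b : Fin n} (hab : a ≠ b)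
    (h : ¬ Q.wpref w a b) : Q.wpref w b a :=
  lt_of_le_of_ne (not_lt.mp h) fun he => hab ((Q.W w).symm.injective he).symm

def proposer (s : GSState n) : Option (Fin n) :=
  (List.finRange n).find? fun m => isUnmatched s m && decide (s.next m < n)

lemma GSstep_eq_self_of_proposer_eq_none {Q : Profile n} {s : GSState n}
    (h : proposer s = none) : GSstep Q s = s := by
  unfold GSstep
  unfold proposer at h
  rw [h]

structure IsProposal (Q : Profile n) (s t : GSState n) (a b : Fin n) : Prop where
  unmatched : ∀ w, s.wmatch w ≠ some a
  mrank_eq : mrank Q a b = s.next a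
  next_eq : t.next = Function.update s.next a (s.next a + 1)
  props_eq : t.props = (a, b) :: s.props
  outcome : (t.wmatch = Function.update s.wmatch b (some a) ∧
      ∀ c, s.wmatch b = some c → Q.wpref b a c) ∨
    ∃ c, s.wmatch b = some c ∧ Q.wpref b c a ∧ t.wmatch = s.wmatch

lemma GSstep_cases (Q : Profile n) (s : GSState n) :
    (proposer s = none ∧ GSstep Q s = s) ∨ ∃ a b, IsProposal Q s (GSstep Q s) a b := by
  rcases hp : proposer s with _ | a
  · exact Or.inl ⟨rfl, GSstep_eq_self_of_proposer_eq_none hp⟩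
  obtain ⟨hu, hlt⟩ : isUnmatched s a ∧ s.next a < n := by
    simpa using List.find?_some hp
  right
  refine ⟨a, Q.M a ⟨s.next a, hlt⟩, ?_⟩
  unfold GSstep
  unfold proposer at hp
  simp only [hp, dif_pos hlt]
  have hu' : ∀ w, s.wmatch w ≠ some a := by simpa [isUnmatched] using hu
  have hrank : mrank Q a (Q.M a ⟨s.next a, hlt⟩) = s.next a := by simp [mrank]
  split
  · next hnone =>
    exact ⟨hu', hrank, rfl, rfl, Or.inl ⟨rfl, by simp [hnone]⟩⟩
  · next c hc =>
    split_ifs with hpref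
    · refine ⟨hu', hrank, rfl, rfl, Or.inl ⟨rfl, fun c' hc' => ?_⟩⟩
      cases hc.symm.trans hc'
      exact hpref
    · refine ⟨hu', hrank, rfl, rfl, Or.inr ⟨c, hc, wpref_of_not_wpref ?_ hpref, rfl⟩⟩
      rintro rfl
      exact hu' _ hc

structure GSInvariant (Q : Profile n) (s : GSState n) : Prop where
  next_le : ∀ a, s.next a ≤ n
  mem_props_iff : ∀ a b, (a, b) ∈ s.props ↔ mrank Q a b < s.next a
  next_of_wmatch : ∀ b a, s.wmatch b = some a → s.next a = mrank Q a b + 1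
  exists_wmatch : ∀ a b, (a, b) ∈ s.props →
    ∃ c, s.wmatch b = some c ∧ (c = a ∨ Q.wpref b c a)

lemma GSInvariant.init (Q : Profile n) : GSInvariant Q (GSinit n) where
  next_le _ := Nat.zero_le n
  mem_props_iff _ _ := by simp [GSinit]
  next_of_wmatch _ _ h := by simp [GSinit] at h
  exists_wmatch _ _ h := by simp [GSinit] at h

namespace GSInvariant

variable {Q : Profile n} {s : GSState n}

lemma eq_of_wmatch (hI : GSInvariant Q s) {b b' a : Fin n} (h : s.wmatch b = some a)
    (h' : s.wmatch b' = some a) : b = b' := by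
  have := hI.next_of_wmatch b a h
  have := hI.next_of_wmatch b' a h'
  exact eq_of_mrank_eq (Q := Q) (a := a) (by omega)

lemma mem_props_of_wmatch (hI : GSInvariant Q s) {b a : Fin n} (h : s.wmatch b = some a) :
    (a, b) ∈ s.props := by
  rw [hI.mem_props_iff, hI.next_of_wmatch b a h]
  exact Nat.lt_succ_self _

end GSInvariant

namespace IsProposal

variable {Q : Profile n} {s t : GSState n} {a b : Fin n}

lemma wmatch_eq_some (hP : IsProposal Q s t a b) {y x : Fin n} (h : t.wmatch y = some x) :
    (y = b ∧ x = a) ∨ s.wmatch y = some x := by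
  rcases hP.outcome with ⟨hw, -⟩ | ⟨c, -, -, hw⟩
  · rw [hw] at h
    rcases eq_or_ne y b with rfl | hy
    · simp_all
    · rw [Function.update_of_ne hy] at h
      exact Or.inr h
  · exact Or.inr (hw ▸ h)

lemma exists_wmatch_proposee (hP : IsProposal Q s t a b) :
    ∃ c, t.wmatch b = some c ∧ (c = a ∨ Q.wpref b c a) := by
  rcases hP.outcome with ⟨hw, -⟩ | ⟨c, hc, hca, hw⟩
  · exact ⟨a, by rw [hw, Function.update_self], Or.inl rfl⟩
  · exact ⟨c, hw ▸ hc, Or.inr hca⟩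

lemma exists_wmatch_of_wmatch (hP : IsProposal Q s t a b) {y c : Fin n}
    (h : s.wmatch y = some c) : ∃ c', t.wmatch y = some c' ∧ (c' = c ∨ Q.wpref y c' c) := by
  rcases hP.outcome with ⟨hw, hbetter⟩ | ⟨-, -, -, hw⟩
  · rcases eq_or_ne y b with rfl | hy
    · exact ⟨a, by rw [hw, Function.update_self], Or.inr (hbetter c h)⟩
    · exact ⟨c, by rw [hw, Function.update_of_ne hy, h], Or.inl rfl⟩
  · exact ⟨c, hw ▸ h, Or.inl rfl⟩

lemma mem_props_iff (hP : IsProposal Q s t a b) (hI : GSInvariant Q s) (x y : Fin n) :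
    (x, y) ∈ t.props ↔ mrank Q x y < t.next x := by
  rw [hP.props_eq, hP.next_eq, List.mem_cons, Prod.mk.injEq, hI.mem_props_iff]
  rcases eq_or_ne x a with rfl | hx
  · rw [Function.update_self, ← hP.mrank_eq]
    constructor
    · rintro (⟨-, rfl⟩ | h) <;> omega
    · intro h
      rcases Nat.lt_succ_iff_lt_or_eq.mp h with h | h
      · exact Or.inr h
      · exact Or.inl ⟨rfl, eq_of_mrank_eq h⟩
  · simp [hx]

lemma gsInvariant (hI : GSInvariant Q s) (hP : IsProposal Q s t a b) : GSInvariant Q t where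
  next_le x := by
    rw [hP.next_eq]
    rcases eq_or_ne x a with rfl | hx
    · rw [Function.update_self, ← hP.mrank_eq]
      exact mrank_lt Q x b
    · rw [Function.update_of_ne hx]
      exact hI.next_le x
  mem_props_iff := hP.mem_props_iff hI
  next_of_wmatch y x h := by
    rw [hP.next_eq]
    rcases hP.wmatch_eq_some h with ⟨rfl, rfl⟩ | h
    · rw [Function.update_self, hP.mrank_eq]
    · have hx : x ≠ a := by rintro rfl; exact hP.unmatched y h
      rw [Function.update_of_ne hx]
      exact hI.next_of_wmatch y x h
  exists_wmatch x y h := by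
    rw [hP.props_eq, List.mem_cons] at h
    rcases h with h | h
    · cases h
      exact hP.exists_wmatch_proposee
    · obtain ⟨c, hc, hcx⟩ := hI.exists_wmatch x y h
      obtain ⟨c', hc', hc'c⟩ := hP.exists_wmatch_of_wmatch hc
      refine ⟨c', hc', ?_⟩
      rcases hc'c with rfl | hc'c
      · exact hcx
      · rcases hcx with rfl | hcx
        · exact Or.inr hc'c
        · exact Or.inr (lt_trans hc'c hcx)

end IsProposal

lemma props_subset_GSstep (Q : Profile n) (s : GSState n) : s.props ⊆ (GSstep Q s).props := by
  rcases GSstep_cases Q s with ⟨-, h⟩ | ⟨a, b, hP⟩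
  · rw [h]
    exact List.Subset.refl _
  · rw [hP.props_eq]
    exact List.subset_cons_self _ _

def stage (Q : Profile n) (k : ℕ) : GSState n := (GSstep Q)^[k] (GSinit n)

section Run

variable (Q : Profile n)

lemma stage_succ (k : ℕ) : stage Q (k + 1) = GSstep Q (stage Q k) :=
  Function.iterate_succ_apply' _ _ _

lemma GSrun_eq_stage : GSrun Q = stage Q (n * n + 1) := rfl

lemma gsInvariant_stage (k : ℕ) : GSInvariant Q (stage Q k) := by
  induction k with
  | zero => exact GSInvariant.init Q
  | succ k ih =>
    rw [stage_succ]
    rcases GSstep_cases Q (stage Q k) with ⟨-, h⟩ | ⟨a, b, hP⟩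
    · rwa [h]
    · exact hP.gsInvariant ih

lemma gsInvariant_GSrun : GSInvariant Q (GSrun Q) := gsInvariant_stage Q _

lemma props_stage_mono {j k : ℕ} (hjk : j ≤ k) : (stage Q j).props ⊆ (stage Q k).props := by
  induction k, hjk using Nat.le_induction with
  | base => exact List.Subset.refl _
  | succ k _ ih => exact List.Subset.trans ih (stage_succ Q k ▸ props_subset_GSstep Q _)

lemma stage_eq_of_proposer_eq_none {j k : ℕ} (h : proposer (stage Q j) = none) (hjk : j ≤ k) :
    stage Q k = stage Q j := by
  induction k, hjk using Nat.le_induction with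
  | base => rfl
  | succ k _ ih => rw [stage_succ, ih, GSstep_eq_self_of_proposer_eq_none h]

def potential (s : GSState n) : ℕ := ∑ a, s.next a

lemma potential_le {s : GSState n} (hI : GSInvariant Q s) : potential s ≤ n * n :=
  calc potential s ≤ ∑ _a : Fin n, n := Finset.sum_le_sum fun a _ => hI.next_le a
    _ = n * n := by simp

lemma IsProposal.potential_eq {s t : GSState n} {a b : Fin n} (hP : IsProposal Q s t a b) :
    potential t = potential s + 1 := by
  unfold potential
  rw [hP.next_eq, Finset.sum_update_of_mem (Finset.mem_univ a),
    Finset.sum_eq_sum_sdiff_singleton_add (Finset.mem_univ a) s.next]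
  omega

lemma exists_proposer_eq_none_or_potential_eq (k : ℕ) :
    (∃ j ≤ k, proposer (stage Q j) = none) ∨ potential (stage Q k) = k := by
  induction k with
  | zero => exact Or.inr (by simp [potential, stage, GSinit])
  | succ k ih =>
    rcases ih with ⟨j, hj, h⟩ | ih
    · exact Or.inl ⟨j, hj.trans k.le_succ, h⟩
    rcases GSstep_cases Q (stage Q k) with ⟨h, -⟩ | ⟨a, b, hP⟩
    · exact Or.inl ⟨k, k.le_succ, h⟩
    · rw [← stage_succ] at hP
      exact Or.inr (by rw [hP.potential_eq, ih])

lemma proposer_GSrun : proposer (GSrun Q) = none := by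
  rcases exists_proposer_eq_none_or_potential_eq Q (n * n + 1) with ⟨j, hj, h⟩ | h
  · rwa [GSrun_eq_stage, stage_eq_of_proposer_eq_none Q h hj]
  · have := potential_le Q (gsInvariant_stage Q (n * n + 1))
    omega

lemma exists_wmatch_GSrun (a : Fin n) : ∃ b, (GSrun Q).wmatch b = some a := by
  by_contra! hun
  have hI := gsInvariant_GSrun Q
  have hnext : (GSrun Q).next a = n := by
    have h := List.find?_eq_none.mp (proposer_GSrun Q) a (List.mem_finRange a)
    simp only [isUnmatched, Bool.and_eq_true, decide_eq_true_eq, not_and, not_lt] at h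
    exact le_antisymm (hI.next_le a) (h hun)
  have hheld : ∀ b, ∃ c, (GSrun Q).wmatch b = some c := fun b => by
    obtain ⟨c, hc, -⟩ :=
      hI.exists_wmatch a b ((hI.mem_props_iff a b).mpr (hnext.symm ▸ mrank_lt Q a b))
    exact ⟨c, hc⟩
  choose holder hholder using hheld
  have hinj : Function.Injective holder := fun b b' h =>
    hI.eq_of_wmatch (hholder b) (h ▸ hholder b')
  obtain ⟨b, hb⟩ := (Finite.injective_iff_surjective.mp hinj) a
  exact hun b (hb ▸ hholder b)

end Run

section DA

variable (Q : Profile n)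

lemma wmatch_GSrun_DA (a : Fin n) : (GSrun Q).wmatch (DA Q a) = some a := by
  unfold DA
  rw [dif_pos (exists_wmatch_GSrun Q a)]
  exact (exists_wmatch_GSrun Q a).choose_spec

lemma DA_eq_of_wmatch {a b : Fin n} (h : (GSrun Q).wmatch b = some a) : DA Q a = b :=
  (gsInvariant_GSrun Q).eq_of_wmatch (wmatch_GSrun_DA Q a) h

lemma DA_injective : Function.Injective (DA Q) := fun a a' h => by
  have h' := wmatch_GSrun_DA Q a'
  rw [← h, wmatch_GSrun_DA Q a] at h'
  exact Option.some_injective _ h'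

lemma next_GSrun (a : Fin n) : (GSrun Q).next a = mrank Q a (DA Q a) + 1 :=
  (gsInvariant_GSrun Q).next_of_wmatch _ a (wmatch_GSrun_DA Q a)

lemma mem_props_GSrun_iff {a b : Fin n} :
    (a, b) ∈ (GSrun Q).props ↔ mrank Q a b ≤ mrank Q a (DA Q a) := by
  rw [(gsInvariant_GSrun Q).mem_props_iff, next_GSrun, Nat.lt_succ_iff]

lemma stable_DA : Stable Q (DA Q) := by
  refine ⟨Finite.injective_iff_bijective.mp (DA_injective Q), fun a w ⟨ha, m', hm', hw⟩ => ?_⟩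
  obtain ⟨c, hc, hca⟩ := (gsInvariant_GSrun Q).exists_wmatch a w ((mem_props_GSrun_iff Q).mpr ha.le)
  obtain rfl : m' = c := DA_injective Q (hm'.trans (DA_eq_of_wmatch Q hc).symm)
  rcases hca with rfl | hca
  · exact lt_irrefl _ (hm' ▸ ha)
  · exact lt_asymm hw hca

end DA

def NotRejectedByPartner (Q : Profile n) (μ : Fin n → Fin n) (s : GSState n) : Prop :=
  ∀ x, mrank Q x (μ x) < s.next x → s.wmatch (μ x) = some x

section Optimality

variable {Q : Profile n} {μ : Fin n → Fin n} {s t : GSState n}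

lemma NotRejectedByPartner.next_le (hR : NotRejectedByPartner Q μ s) {x : Fin n}
    (hx : ∀ w, s.wmatch w ≠ some x) : s.next x ≤ mrank Q x (μ x) :=
  not_lt.mp fun h => hx _ (hR x h)

lemma IsProposal.notRejectedByPartner (hst : Stable Q μ) (hI : GSInvariant Q s)
    (hR : NotRejectedByPartner Q μ s) {a b : Fin n} (hP : IsProposal Q s t a b) :
    NotRejectedByPartner Q μ t := by
  have hμ := hst.1.injective
  have ha := hR.next_le hP.unmatched
  have hab := hP.mrank_eq
  intro x hx
  rw [hP.next_eq] at hx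
  rcases eq_or_ne x a with rfl | hxa
  · rw [Function.update_self] at hx
    have hxb : μ x = b := eq_of_mrank_eq (by rw [hP.mrank_eq]; omega)
    rcases hP.outcome with ⟨hw, -⟩ | ⟨c, hc, hcx, -⟩
    · rw [hxb, hw, Function.update_self]
    · -- the woman `b` keeps `c`, so `(c, b)` blocks `μ`
      have hcx' : c ≠ x := by rintro rfl; exact hP.unmatched _ hc
      have hcb : μ c ≠ b := fun h => hcx' (hμ (h.trans hxb.symm))
      have hc_next := hI.next_of_wmatch b c hc
      have hc_rank : s.next c ≤ mrank Q c (μ c) :=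
        not_lt.mp fun h => hcb (hI.eq_of_wmatch (hR c h) hc)
      exact absurd ⟨mpref_iff_mrank_lt.mpr (by omega), x, hxb, hcx⟩ (hst.2 c b)
  · rw [Function.update_of_ne hxa] at hx
    have hheld := hR x hx
    rcases hP.outcome with ⟨hw, hbetter⟩ | ⟨-, -, -, hw⟩
    · rcases eq_or_ne (μ x) b with hxb | hxb
      · -- `a` displaces `x` at `b`, so `(a, b)` blocks `μ`
        have hμa : μ a ≠ b := fun h => hxa (hμ (hxb.trans h.symm))
        have hrank : mrank Q a b ≠ mrank Q a (μ a) := fun h => hμa (eq_of_mrank_eq h).symm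
        have hblock : Blocks Q μ a b :=
          ⟨mpref_iff_mrank_lt.mpr (by omega), x, hxb, hbetter x (hxb ▸ hheld)⟩
        exact absurd hblock (hst.2 a b)
      · rw [hw, Function.update_of_ne hxb]
        exact hheld
    · rw [hw]
      exact hheld

end Optimality

lemma notRejectedByPartner_stage {Q : Profile n} {μ : Fin n → Fin n} (hst : Stable Q μ)
    (k : ℕ) : NotRejectedByPartner Q μ (stage Q k) := by
  induction k with
  | zero => intro x hx; simp [stage, GSinit] at hx
  | succ k ih =>
    rw [stage_succ]
    rcases GSstep_cases Q (stage Q k) with ⟨-, h⟩ | ⟨a, b, hP⟩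
    · rwa [h]
    · exact hP.notRejectedByPartner hst (gsInvariant_stage Q k) ih

theorem DA_optimal {Q : Profile n} {μ : Fin n → Fin n} (hst : Stable Q μ) (a : Fin n) :
    mrank Q a (DA Q a) ≤ mrank Q a (μ a) := by
  by_contra! h
  have hheld := notRejectedByPartner_stage hst (n * n + 1) a (by
    rw [← GSrun_eq_stage, next_GSrun]
    omega)
  rw [← GSrun_eq_stage] at hheld
  exact h.ne' (congrArg _ (DA_eq_of_wmatch Q hheld))

lemma exists_last_proposal (Q : Profile n) (S : Set (Fin n × Fin n))
    (hS : ∃ p ∈ S, p ∈ (GSrun Q).props) :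
    ∃ k a b, (a, b) ∈ S ∧ (a, b) ∈ (GSrun Q).props ∧
      IsProposal Q (stage Q k) (stage Q (k + 1)) a b ∧ (stage Q k).props ⊆ (GSrun Q).props ∧
      ∀ p ∈ S, p ∈ (GSrun Q).props → p ∈ (stage Q (k + 1)).props := by
  classical
  have hex : ∃ j, ∀ p ∈ S, p ∈ (GSrun Q).props → p ∈ (stage Q j).props :=
    ⟨n * n + 1, fun _ _ hp => hp⟩
  obtain ⟨k, hk⟩ : ∃ k, Nat.find hex = k + 1 := Nat.exists_eq_succ_of_ne_zero fun h0 => by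
    obtain ⟨p, hpS, hp⟩ := hS
    have := Nat.find_spec hex p hpS hp
    rw [h0] at this
    simp [stage, GSinit] at this
  have hspec := Nat.find_spec hex
  rw [hk] at hspec
  have hsub : (stage Q k).props ⊆ (GSrun Q).props :=
    props_stage_mono Q (by have := Nat.find_min' hex fun _ _ hp => hp; omega)
  obtain ⟨p, hpS, hp, hpk⟩ : ∃ p ∈ S, p ∈ (GSrun Q).props ∧ p ∉ (stage Q k).props := by
    simpa using Nat.find_min hex (show k < Nat.find hex by omega)
  rcases GSstep_cases Q (stage Q k) with ⟨-, h⟩ | ⟨a, b, hP⟩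
  · rw [← stage_succ] at h
    exact absurd (h ▸ hspec p hpS hp) hpk
  rw [← stage_succ] at hP
  obtain rfl : p = (a, b) := by
    have := hspec p hpS hp
    rw [hP.props_eq, List.mem_cons] at this
    exact this.resolve_right hpk
  exact ⟨k, a, b, hpS, hp, hP, hsub, hspec⟩

/-- Of all proposals by men of `M` to partners of men of `M`, the last one is made by a man of
`M` to his own partner. -/
lemma exists_last_proposal_to_DA (Q : Profile n) {M : Set (Fin n)} (hM : M.Nonempty) :
    ∃ k, ∃ a ∈ M, IsProposal Q (stage Q k) (stage Q (k + 1)) a (DA Q a) ∧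
      (stage Q k).props ⊆ (GSrun Q).props ∧
      ∀ x ∈ M, ∀ y ∈ DA Q '' M, mrank Q x y ≤ mrank Q x (DA Q x) →
        (x, y) = (a, DA Q a) ∨ (x, y) ∈ (stage Q k).props := by
  obtain ⟨a₀, ha₀⟩ := hM
  obtain ⟨k, a, b, ⟨ha, hb⟩, hab, hP, hsub, hlast⟩ :=
    exists_last_proposal Q {p | p.1 ∈ M ∧ p.2 ∈ DA Q '' M}
      ⟨(a₀, DA Q a₀), ⟨ha₀, a₀, ha₀, rfl⟩, (mem_props_GSrun_iff Q).mpr le_rfl⟩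
  have hlast' : ∀ x ∈ M, ∀ y ∈ DA Q '' M, mrank Q x y ≤ mrank Q x (DA Q x) →
      (x, y) = (a, b) ∨ (x, y) ∈ (stage Q k).props := fun x hx y hy hxy => by
    have := hlast (x, y) ⟨hx, hy⟩ ((mem_props_GSrun_iff Q).mpr hxy)
    rwa [hP.props_eq, List.mem_cons] at this
  obtain rfl : b = DA Q a := by
    rcases hlast' a ha (DA Q a) ⟨a, ha, rfl⟩ le_rfl with h | h
    · exact (Prod.mk.inj h).2.symm
    · have h1 := ((gsInvariant_stage Q k).mem_props_iff _ _).mp h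
      have h2 := hP.mrank_eq
      have h3 := (mem_props_GSrun_iff Q).mp hab
      omega
  exact ⟨k, a, ha, hP, hsub, hlast'⟩

def improvers (Q : Profile n) (ν : Fin n → Fin n) : Set (Fin n) :=
  {a | Q.mpref a (ν a) (DA Q a)}

section Blocking

variable {Q : Profile n} {ν : Fin n → Fin n}

lemma exists_blocks_of_not_mem_image (hν : Function.Injective ν) {a : Fin n}
    (ha : a ∈ improvers Q ν) (hνa : ν a ∉ DA Q '' improvers Q ν) :
    ∃ x ∉ improvers Q ν, ∃ w, Blocks Q ν x w := by
  obtain ⟨x, hx⟩ := (stable_DA Q).1.2 (ν a)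
  have hxM : x ∉ improvers Q ν := fun hxM => hνa ⟨x, hxM, hx⟩
  have hxa : x ≠ a := by
    rintro rfl
    exact (mpref_iff_mrank_lt.mp ha).ne (congrArg _ hx.symm)
  have hwx : Q.wpref (ν a) x a :=
    wpref_of_not_wpref hxa.symm fun h => (stable_DA Q).2 a (ν a) ⟨ha, x, hx, h⟩
  have hrank : mrank Q x (ν a) ≠ mrank Q x (ν x) :=
    fun h => hxa (hν (eq_of_mrank_eq h)).symm
  have hxM' : ¬ mrank Q x (ν x) < mrank Q x (DA Q x) := hxM
  rw [hx] at hxM'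
  exact ⟨x, hxM, ν a, mpref_iff_mrank_lt.mpr (by omega), a, rfl, hwx⟩

lemma exists_blocks_of_image_eq (hne : (improvers Q ν).Nonempty)
    (himg : ν '' improvers Q ν = DA Q '' improvers Q ν) :
    ∃ x ∉ improvers Q ν, ∃ w, Blocks Q ν x w := by
  set M := improvers Q ν
  obtain ⟨k, m₀, hm₀, hP, hsub, hlast⟩ := exists_last_proposal_to_DA Q hne
  have hI := gsInvariant_stage Q k
  -- `m₀`'s partner is also the `ν`-partner of some `m₂ ∈ M`, who proposed to her earlier
  obtain ⟨m₂, hm₂, hνm₂⟩ : DA Q m₀ ∈ ν '' M := himg ▸ ⟨m₀, hm₀, rfl⟩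
  have hm₂m₀ : m₂ ≠ m₀ := by
    rintro rfl
    exact (mpref_iff_mrank_lt.mp hm₂).ne (congrArg _ hνm₂)
  have hm₂s : (m₂, DA Q m₀) ∈ (stage Q k).props := by
    have h := (mpref_iff_mrank_lt.mp hm₂).le
    rw [hνm₂] at h
    exact (hlast m₂ hm₂ _ ⟨m₀, hm₀, rfl⟩ h).resolve_left fun he => hm₂m₀ (Prod.mk.inj he).1
  -- so when `m₀` proposes, she holds some `m₁` she likes at least as much as `m₂`
  obtain ⟨m₁, hm₁, hm₁m₂⟩ := hI.exists_wmatch m₂ _ hm₂s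
  have hm₁m₀ : m₁ ≠ m₀ := by
    rintro rfl
    exact hP.unmatched _ hm₁
  have hm₁_rank : mrank Q m₁ (DA Q m₀) < mrank Q m₁ (DA Q m₁) :=
    lt_of_le_of_ne ((mem_props_GSrun_iff Q).mp (hsub (hI.mem_props_of_wmatch hm₁)))
      fun h => hm₁m₀ (DA_injective Q (eq_of_mrank_eq h)).symm
  have hm₁M : m₁ ∉ M := by
    intro hm₁M
    have := hI.next_of_wmatch _ m₁ hm₁
    rcases hlast m₁ hm₁M _ ⟨m₁, hm₁M, rfl⟩ le_rfl with h | h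
    · exact hm₁m₀ (Prod.mk.inj h).1
    · have := (hI.mem_props_iff _ _).mp h
      omega
  have hm₁M' : ¬ mrank Q m₁ (ν m₁) < mrank Q m₁ (DA Q m₁) := hm₁M
  refine ⟨m₁, hm₁M, DA Q m₀, mpref_iff_mrank_lt.mpr (by omega), m₂, hνm₂, ?_⟩
  rcases hm₁m₂ with rfl | h
  · exact absurd hm₂ hm₁M
  · exact h

/-- The blocking lemma of Gale and Sotomayor. -/
theorem exists_blocks_of_improvers_nonempty (hν : Function.Injective ν)
    (hne : (improvers Q ν).Nonempty) : ∃ x ∉ improvers Q ν, ∃ w, Blocks Q ν x w := by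
  by_cases hsub : ν '' improvers Q ν ⊆ DA Q '' improvers Q ν
  · refine exists_blocks_of_image_eq hne (Set.eq_of_subset_of_ncard_le hsub ?_ (Set.toFinite _))
    rw [Set.ncard_image_of_injective _ (DA_injective Q), Set.ncard_image_of_injective _ hν]
  · obtain ⟨_, ⟨a, ha, rfl⟩, hνa⟩ := Set.not_subset.mp hsub
    exact exists_blocks_of_not_mem_image hν ha hνa

end Blocking

section UpdateM

variable (Q : Profile n) (m : Fin n)

lemma updateM_M_self (e : Fin n ≃ Fin n) : (Q.updateM m e).M m = e := by
  simp [Profile.updateM]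

lemma updateM_M_of_ne {x : Fin n} (hx : x ≠ m) (e : Fin n ≃ Fin n) :
    (Q.updateM m e).M x = Q.M x := by
  simp [Profile.updateM, hx]

lemma updateM_updateM (e e' : Fin n ≃ Fin n) : (Q.updateM m e).updateM m e' = Q.updateM m e' := by
  simp [Profile.updateM]

theorem DA_strategyproof (e : Fin n ≃ Fin n) : ¬ Q.mpref m (DA (Q.updateM m e) m) (DA Q m) := by
  intro h
  obtain ⟨x, hx, w, hxw, hw⟩ :=
    exists_blocks_of_improvers_nonempty (DA_injective (Q.updateM m e)) ⟨m, h⟩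
  have hxm : x ≠ m := by
    rintro rfl
    exact hx h
  refine (stable_DA (Q.updateM m e)).2 x w ⟨?_, hw⟩
  rwa [Profile.mpref, updateM_M_of_ne Q m hxm]

variable {Q m}

lemma stable_updateM_of_above_subset {μ : Fin n → Fin n} (hst : Stable Q μ) {e : Fin n ≃ Fin n}
    (h : Above e (μ m) ⊆ Above (Q.M m) (μ m)) : Stable (Q.updateM m e) μ := by
  refine ⟨hst.1, fun x w ⟨hxw, hw⟩ => hst.2 x w ⟨?_, hw⟩⟩
  rcases eq_or_ne x m with rfl | hxm
  · rw [Profile.mpref, updateM_M_self] at hxw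
    exact h hxw
  · rwa [Profile.mpref, updateM_M_of_ne Q m hxm] at hxw

theorem DA_updateM_eq_of_above_subset {e : Fin n ≃ Fin n}
    (h : Above e (DA Q m) ⊆ Above (Q.M m) (DA Q m)) : DA (Q.updateM m e) m = DA Q m := by
  have hopt := DA_optimal (stable_updateM_of_above_subset (stable_DA Q) h) m
  by_contra hne
  refine DA_strategyproof Q m e (h ?_)
  have hne' : mrank (Q.updateM m e) m (DA (Q.updateM m e) m) ≠ mrank (Q.updateM m e) m (DA Q m) :=
    fun h => hne (eq_of_mrank_eq h)
  simp only [mrank, updateM_M_self] at hopt hne'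
  exact Fin.lt_def.mpr (lt_of_le_of_ne hopt hne')

end UpdateM

end StableMarriage

theorem pushUp_single_noRegret_general (n : ℕ) (P : Profile n) (m : Fin n)
    (X : Set (Fin n))
    (e' : Fin n ≃ Fin n) (hpu : PushUp P m X e')
    (hnr : DA (P.updateM m e') m = DA P m) :
    ∀ wx ∈ X, ∀ ex : Fin n ≃ Fin n, PushUp P m {wx} ex →
      DA (P.updateM m ex) m = DA P m := by
  intro wx hwx ex hex
  have hsub : Above ex (DA P m) ⊆ Above e' (DA P m) := by
    rw [PushUp, PushUpDown, Set.sdiff_empty] at hpu hex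
    rw [hex, hpu]
    exact Set.union_subset_union_right _ (Set.singleton_subset_iff.mpr hwx)
  rw [← StableMarriage.updateM_updateM P m e' ex,
    StableMarriage.DA_updateM_eq_of_above_subset, hnr]
  rwa [hnr, StableMarriage.updateM_M_self]

/-- If pushing up the set `X` causes no regret for `m`, then pushing
up each single woman of `X` individually also causes no regret. -/
theorem pushUp_single_noRegret (n : ℕ) (P : Profile n) (m : Fin n)
    (X : Set (Fin n)) (hX : X ⊆ Below (P.M m) (DA P m))
    (e' : Fin n ≃ Fin n) (hpu : PushUp P m X e')
    (hnr : DA (P.updateM m e') m = DA P m) :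
    ∀ wx ∈ X, ∀ ex : Fin n ≃ Fin n, PushUp P m {wx} ex →
      DA (P.updateM m ex) m = DA P m :=
  pushUp_single_noRegret_general n P m X e' hpu hnr
end

section
/- Suppose man m pushes up a set X of women below his DA partner without incurring regret, and every woman in X prefers her original DA partner to m. Then the DA matching is unchanged: μ' = μ. -/
/- ======================== auxiliary development ======================== -/

open Function

variable {n : ℕ}


lemma GSstep_none {P : Profile n} {s : GSState n}
    (h : (List.finRange n).find? (fun m => isUnmatched s m && decide (s.next m < n)) = none) :
    GSstep P s = s := by
  simp [GSstep, h]

/-- characterization of a productive step -/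
lemma GSstep_some {P : Profile n} {s : GSState n} {m : Fin n}
    (hf : (List.finRange n).find? (fun m => isUnmatched s m && decide (s.next m < n)) = some m) :
    ∃ h : s.next m < n,
      (∀ w, s.wmatch w ≠ some m) ∧
      (let w := P.M m ⟨s.next m, h⟩;
       (s.wmatch w = none ∧
          GSstep P s = { next := Function.update s.next m (s.next m + 1),
                         wmatch := Function.update s.wmatch w (some m),
                         props := (m, w) :: s.props }) ∨
       (∃ m', s.wmatch w = some m' ∧
          ((((P.W w).symm m : ℕ) < ((P.W w).symm m' : ℕ)) ∧
            GSstep P s = { next := Function.update s.next m (s.next m + 1),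
                           wmatch := Function.update s.wmatch w (some m),
                           props := (m, w) :: s.props } ∨
           (¬ (((P.W w).symm m : ℕ) < ((P.W w).symm m' : ℕ)) ∧
            GSstep P s = { next := Function.update s.next m (s.next m + 1),
                           wmatch := s.wmatch,
                           props := (m, w) :: s.props })))) := by
  have hp := List.find?_some hf
  simp only [Bool.and_eq_true, decide_eq_true_eq, isUnmatched] at hp
  obtain ⟨hu, hlt⟩ := hp
  refine ⟨hlt, hu, ?_⟩
  set w := P.M m ⟨s.next m, hlt⟩ with hw
  cases hm : s.wmatch w with
  | none =>
    left
    refine ⟨hm, ?_⟩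
    simp [GSstep, hf, hlt, ← hw, hm]
  | some m' =>
    right
    refine ⟨m', hm, ?_⟩
    by_cases hc : (P.W w).symm m < (P.W w).symm m'
    · left
      refine ⟨hc, ?_⟩
      simp [GSstep, hf, hlt, ← hw, hm, hc]
    · right
      refine ⟨by exact_mod_cast hc, ?_⟩
      simp [GSstep, hf, hlt, ← hw, hm, hc]

/-- Basic invariants of the GS state. -/
def GSInv (P : Profile n) (s : GSState n) : Prop :=
  (∀ m, s.next m ≤ n) ∧
  (∀ m w, s.wmatch w = some m → s.next m = ((P.M m).symm w : ℕ) + 1) ∧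
  (∀ m k, k < s.next m → ∀ hk : k < n, ∃ m', s.wmatch (P.M m ⟨k, hk⟩) = some m' ∧
      ((P.W (P.M m ⟨k, hk⟩)).symm m' : ℕ) ≤ ((P.W (P.M m ⟨k, hk⟩)).symm m : ℕ))

lemma GSInv_init (P : Profile n) : GSInv P (GSinit n) := by
  refine ⟨fun m => Nat.zero_le n, fun m w h => by simp [GSinit] at h, fun m k hk => by
    simp [GSinit] at hk⟩

lemma GSInv_step (P : Profile n) {s : GSState n} (hs : GSInv P s) : GSInv P (GSstep P s) := by
  obtain ⟨h0, h1, h2⟩ := hs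
  cases hf : (List.finRange n).find? (fun m => isUnmatched s m && decide (s.next m < n)) with
  | none => rw [GSstep_none hf]; exact ⟨h0, h1, h2⟩
  | some m =>
    obtain ⟨hlt, hu, hbody⟩ := GSstep_some (P := P) hf
    set w : Fin n := P.M m ⟨s.next m, hlt⟩ with hw
    have hrank : ((P.M m).symm w : ℕ) = s.next m := by rw [hw]; simp
    have accept : ∀ (hcond : ∀ m'', s.wmatch w = some m'' →
          ((P.W w).symm m : ℕ) < ((P.W w).symm m'' : ℕ)),
        GSInv P { next := Function.update s.next m (s.next m + 1),
                  wmatch := Function.update s.wmatch w (some m),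
                  props := (m, w) :: s.props } := by
      intro hcond
      refine ⟨?_, ?_, ?_⟩
      · intro m₀
        dsimp only
        by_cases h : m₀ = m
        · subst h; simpa using hlt
        · simpa [Function.update_of_ne h] using h0 m₀
      · intro m₀ w₀ hm₀
        dsimp only at hm₀ ⊢
        by_cases hww : w₀ = w
        · subst hww
          rw [Function.update_self] at hm₀
          cases hm₀
          rw [Function.update_self, hrank]
        · rw [Function.update_of_ne hww] at hm₀
          have hne : m₀ ≠ m := by
            rintro rfl; exact hu w₀ hm₀
          rw [Function.update_of_ne hne]
          exact h1 m₀ w₀ hm₀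
      · intro m₀ k hk hkn
        dsimp only at hk ⊢
        by_cases huw : P.M m₀ ⟨k, hkn⟩ = w
        · refine ⟨m, by rw [huw, Function.update_self], ?_⟩
          by_cases hmm : m₀ = m
          · subst hmm; exact le_refl _
          · rw [Function.update_of_ne hmm] at hk
            obtain ⟨m'', hm'', hr⟩ := h2 m₀ k hk hkn
            rw [huw] at hm'' hr ⊢
            have := hcond m'' hm''
            omega
        · rw [Function.update_of_ne huw]
          by_cases hmm : m₀ = m
          · subst hmm
            rw [Function.update_self] at hk
            rcases Nat.lt_succ_iff_lt_or_eq.mp hk with hk' | hk'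
            · exact h2 m₀ k hk' hkn
            · exact absurd (congrArg (P.M m₀) (Fin.ext hk')) huw
          · rw [Function.update_of_ne hmm] at hk
            exact h2 m₀ k hk hkn
    rcases hbody with ⟨hnone, heq⟩ | ⟨m', hsome, ⟨hc, heq⟩ | ⟨hc, heq⟩⟩
    · rw [heq]; exact accept (fun m'' h => by rw [hnone] at h; cases h)
    · rw [heq]; exact accept (fun m'' h => by rw [hsome] at h; cases h; exact hc)
    · rw [heq]
      refine ⟨?_, ?_, ?_⟩
      · intro m₀
        dsimp only
        by_cases h : m₀ = m
        · subst h; simpa using hlt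
        · simpa [Function.update_of_ne h] using h0 m₀
      · intro m₀ w₀ hm₀
        dsimp only at hm₀ ⊢
        have hne : m₀ ≠ m := by rintro rfl; exact hu w₀ hm₀
        rw [Function.update_of_ne hne]
        exact h1 m₀ w₀ hm₀
      · intro m₀ k hk hkn
        dsimp only at hk ⊢
        by_cases hmm : m₀ = m
        · subst hmm
          rw [Function.update_self] at hk
          rcases Nat.lt_succ_iff_lt_or_eq.mp hk with hk' | hk'
          · exact h2 m₀ k hk' hkn
          · have huw : P.M m₀ ⟨k, hkn⟩ = w := congrArg (P.M m₀) (Fin.ext hk')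
            refine ⟨m', by rw [huw]; exact hsome, ?_⟩
            rw [huw]; omega
        · rw [Function.update_of_ne hmm] at hk
          exact h2 m₀ k hk hkn
/-- sum of next pointers -/
def msum (s : GSState n) : ℕ := ∑ m : Fin n, s.next m

lemma msum_step {P : Profile n} {s : GSState n} {m : Fin n}
    (hf : (List.finRange n).find? (fun m => isUnmatched s m && decide (s.next m < n)) = some m) :
    msum (GSstep P s) = msum s + 1 := by
  obtain ⟨hlt, hu, hbody⟩ := GSstep_some (P := P) hf
  have key : ∀ t : GSState n, t.next = Function.update s.next m (s.next m + 1) →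
      msum t = msum s + 1 := by
    intro t ht
    unfold msum
    rw [ht, Finset.sum_update_of_mem (Finset.mem_univ m),
      ← Finset.sum_erase_add _ _ (Finset.mem_univ m), Finset.erase_eq]
    ring
  rcases hbody with ⟨_, heq⟩ | ⟨m', _, ⟨_, heq⟩ | ⟨_, heq⟩⟩ <;>
    exact key _ (by rw [heq])

lemma msum_le {P : Profile n} {s : GSState n} (hs : GSInv P s) : msum s ≤ n * n := by
  calc msum s ≤ ∑ _m : Fin n, n := Finset.sum_le_sum (fun m _ => hs.1 m)
  _ = n * n := by simp [Finset.sum_const, mul_comm]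

lemma GSiter_inv (P : Profile n) (j : ℕ) : GSInv P ((GSstep P)^[j] (GSinit n)) := by
  induction j with
  | zero => exact GSInv_init P
  | succ k ih => rw [Function.iterate_succ_apply']; exact GSInv_step P ih

lemma GSrun_inv (P : Profile n) : GSInv P (GSrun P) := GSiter_inv P _

lemma GSrun_none (P : Profile n) :
    (List.finRange n).find? (fun m => isUnmatched (GSrun P) m && decide ((GSrun P).next m < n))
      = none := by
  set f := GSstep P with hfdef
  by_contra hne
  have hmono : ∀ j i, (List.finRange n).find? (fun m =>
        isUnmatched (f^[j] (GSinit n)) m && decide ((f^[j] (GSinit n)).next m < n)) = none →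
      f^[j + i] (GSinit n) = f^[j] (GSinit n) := by
    intro j i hj
    induction i with
    | zero => rfl
    | succ i ih =>
      rw [← Nat.add_assoc, Function.iterate_succ_apply', ih, hfdef, GSstep_none hj]
  have hnotnone : ∀ j < n * n + 1, (List.finRange n).find? (fun m =>
        isUnmatched (f^[j] (GSinit n)) m && decide ((f^[j] (GSinit n)).next m < n)) ≠ none := by
    intro j hj hnone
    apply hne
    have := hmono j (n * n + 1 - j) hnone
    rw [Nat.add_sub_cancel' (Nat.le_of_lt_succ hj |>.trans (Nat.le_succ _))] at this
    show (List.finRange n).find? _ = none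
    unfold GSrun
    rw [← hfdef, this]
    exact hnone
  have hsum : ∀ j ≤ n * n + 1, j ≤ msum (f^[j] (GSinit n)) := by
    intro j hj
    induction j with
    | zero => exact Nat.zero_le _
    | succ j ih =>
      have h1 := ih (Nat.le_of_succ_le hj)
      have h2 := hnotnone j (Nat.lt_of_succ_le hj)
      rcases Option.ne_none_iff_exists'.mp h2 with ⟨m, hm⟩
      rw [Function.iterate_succ_apply', hfdef, msum_step hm]
      omega
  have := hsum (n * n + 1) le_rfl
  have hle : msum (f^[n * n + 1] (GSinit n)) ≤ n * n := msum_le (GSiter_inv P _)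
  omega
lemma GSrun_term (P : Profile n) (m : Fin n) :
    (∃ w, (GSrun P).wmatch w = some m) ∨ (GSrun P).next m = n := by
  have h := GSrun_none P
  have := List.find?_eq_none.mp h m (List.mem_finRange m)
  simp only [Bool.and_eq_true, decide_eq_true_eq, isUnmatched, not_and, Bool.not_eq_true] at this
  by_cases hm : ∃ w, (GSrun P).wmatch w = some m
  · exact Or.inl hm
  · right
    push_neg at hm
    have h2 := this hm
    have h3 := (GSrun_inv P).1 m
    omega

/-- the holder map is injective -/
lemma holder_inj (P : Profile n) {w w' m : Fin n}
    (h : (GSrun P).wmatch w = some m) (h' : (GSrun P).wmatch w' = some m) : w = w' := by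
  have i1 := (GSrun_inv P).2.1
  have e1 := i1 m w h
  have e2 := i1 m w' h'
  have : ((P.M m).symm w : ℕ) = ((P.M m).symm w' : ℕ) := by omega
  have : (P.M m).symm w = (P.M m).symm w' := Fin.ext this
  exact (P.M m).symm.injective this

lemma GSrun_matched (P : Profile n) (m : Fin n) : ∃ w, (GSrun P).wmatch w = some m := by
  rcases GSrun_term P m with h | h
  · exact h
  · -- m exhausted his list: every woman is matched, holder map is a bijection
    have hall : ∀ w : Fin n, ∃ m', (GSrun P).wmatch w = some m' := by
      intro w
      have hk : ((P.M m).symm w : ℕ) < (GSrun P).next m := by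
        rw [h]; exact ((P.M m).symm w).isLt
      obtain ⟨m', hm', _⟩ := (GSrun_inv P).2.2 m _ hk ((P.M m).symm w).isLt
      refine ⟨m', ?_⟩
      rwa [Equiv.apply_symm_apply] at hm'
    classical
    let g : Fin n → Fin n := fun w => (hall w).choose
    have hg : ∀ w, (GSrun P).wmatch w = some (g w) := fun w => (hall w).choose_spec
    have hginj : Function.Injective g := by
      intro w w' he
      exact holder_inj P (hg w) (he ▸ hg w')
    have hgsurj := Finite.surjective_of_injective hginj
    obtain ⟨w, hw⟩ := hgsurj m
    exact ⟨w, hw ▸ hg w⟩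

lemma DA_spec (P : Profile n) (m : Fin n) : (GSrun P).wmatch (DA P m) = some m := by
  unfold DA
  rw [dif_pos (GSrun_matched P m)]
  exact (GSrun_matched P m).choose_spec

lemma DA_unique (P : Profile n) {m w : Fin n} (h : (GSrun P).wmatch w = some m) :
    DA P m = w := holder_inj P (DA_spec P m) h

lemma DA_inj (P : Profile n) : Function.Injective (DA P) := by
  intro m m' h
  have h1 := DA_spec P m
  have h2 := DA_spec P m'
  rw [h] at h1
  rw [h1] at h2
  exact Option.some_injective _ h2

lemma DA_bij (P : Profile n) : Function.Bijective (DA P) :=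
  ⟨DA_inj P, Finite.surjective_of_injective (DA_inj P)⟩

lemma DA_stable (P : Profile n) : Stable P (DA P) := by
  refine ⟨DA_bij P, ?_⟩
  rintro m w ⟨hpref, m', hm', hwp⟩
  -- m prefers w to DA P m, and DA P m' = w with w preferring m to m'
  have i1 := (GSrun_inv P).2.1 m (DA P m) (DA_spec P m)
  have hk : ((P.M m).symm w : ℕ) < (GSrun P).next m := by
    have : ((P.M m).symm w : ℕ) < ((P.M m).symm (DA P m) : ℕ) := hpref
    omega
  obtain ⟨m'', hm'', hr⟩ := (GSrun_inv P).2.2 m _ hk ((P.M m).symm w).isLt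
  rw [Equiv.apply_symm_apply] at hm'' hr
  -- m'' holds w, so m'' = m' since DA P m' = w
  have : DA P m'' = w := DA_unique P hm''
  have hmeq : m'' = m' := DA_inj P (by rw [this, hm'])
  subst hmeq
  -- w prefers m'' = m' weakly over m, contradicting hwp : w prefers m over m'
  have : ((P.W w).symm m : ℕ) < ((P.W w).symm m'' : ℕ) := hwp
  omega
/-- Optimality invariant: no man has ever been rejected by a woman he is matched
with in some stable matching. -/
def OptInv (P : Profile n) (s : GSState n) : Prop :=
  ∀ ν, Stable P ν → ∀ m,
    (s.next m ≤ ((P.M m).symm (ν m) : ℕ) + 1) ∧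
    ((∀ w, s.wmatch w ≠ some m) → s.next m ≤ ((P.M m).symm (ν m) : ℕ))

lemma OptInv_init (P : Profile n) : OptInv P (GSinit n) := by
  intro ν hν m
  exact ⟨Nat.zero_le _, fun _ => Nat.zero_le _⟩

lemma OptInv_step (P : Profile n) {s : GSState n} (hI : GSInv P s) (hs : OptInv P s) :
    OptInv P (GSstep P s) := by
  obtain ⟨h0, h1, h2⟩ := hI
  cases hf : (List.finRange n).find? (fun m => isUnmatched s m && decide (s.next m < n)) with
  | none => rw [GSstep_none hf]; exact hs
  | some m =>
    obtain ⟨hlt, hu, hbody⟩ := GSstep_some (P := P) hf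
    set w : Fin n := P.M m ⟨s.next m, hlt⟩ with hw
    have hrank : ((P.M m).symm w : ℕ) = s.next m := by rw [hw]; simp
    intro ν hν
    obtain ⟨hbij, hnb⟩ := hν
    -- m's old bound: s.next m ≤ rank of ν m in m's list (since m was unmatched)
    have hmold : s.next m ≤ ((P.M m).symm (ν m) : ℕ) := ((hs ν ⟨hbij, hnb⟩ m).2) hu
    rcases hbody with ⟨hnone, heq⟩ | ⟨m', hsome, ⟨hc, heq⟩ | ⟨hc, heq⟩⟩
    · -- w unmatched, accepts m
      rw [heq]
      intro m₀
      dsimp only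
      by_cases hmm : m₀ = m
      · subst hmm
        refine ⟨by rw [Function.update_self]; omega, fun habs => ?_⟩
        exact absurd (by rw [Function.update_self] : Function.update s.wmatch w (some m₀) w = some m₀) (habs w)
      · rw [Function.update_of_ne hmm]
        refine ⟨(hs ν ⟨hbij, hnb⟩ m₀).1, fun hunm => ?_⟩
        refine (hs ν ⟨hbij, hnb⟩ m₀).2 (fun u hu' => ?_)
        by_cases huw : u = w
        · rw [huw, hnone] at hu'; cases hu'
        · exact hunm u (by rwa [Function.update_of_ne huw])
    · -- w held m', accepts m (displacing m')
      rw [heq]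
      have hm'm : m' ≠ m := fun h => hu w (h ▸ hsome)
      -- m' was matched only at w
      have hm'_rank : s.next m' = ((P.M m').symm w : ℕ) + 1 := h1 m' w hsome
      intro m₀
      dsimp only
      by_cases hmm : m₀ = m
      · subst hmm
        refine ⟨by rw [Function.update_self]; omega, fun habs => ?_⟩
        exact absurd (by rw [Function.update_self] : Function.update s.wmatch w (some m₀) w = some m₀) (habs w)
      · rw [Function.update_of_ne hmm]
        refine ⟨(hs ν ⟨hbij, hnb⟩ m₀).1, fun hunm => ?_⟩
        by_cases hmm' : m₀ = m'
        · -- the displaced man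
          subst hmm'
          -- show ν m₀ ≠ w
          have hnu : ν m₀ ≠ w := by
            intro hnu
            -- (m, w) blocks ν
            apply hnb m w
            refine ⟨?_, m₀, hnu, ?_⟩
            · show ((P.M m).symm w : ℕ) < ((P.M m).symm (ν m) : ℕ)
              have : ν m ≠ w := fun h => hm'm (hbij.1 (hnu.trans h.symm))
              have hne : (P.M m).symm (ν m) ≠ (P.M m).symm w :=
                fun h => ‹ν m ≠ w› ((P.M m).symm.injective h)
              have : ((P.M m).symm (ν m) : ℕ) ≠ ((P.M m).symm w : ℕ) := fun h => hne (Fin.ext h)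
              omega
            · show ((P.W w).symm m : ℕ) < ((P.W w).symm m₀ : ℕ)
              exact hc
          have hma : ((P.M m₀).symm (ν m₀) : ℕ) ≠ ((P.M m₀).symm w : ℕ) := by
            intro h
            exact hnu ((P.M m₀).symm.injective (Fin.ext h))
          have := (hs ν ⟨hbij, hnb⟩ m₀).1
          omega
        · -- other men: still matched if they were
          refine (hs ν ⟨hbij, hnb⟩ m₀).2 (fun u hu' => ?_)
          by_cases huw : u = w
          · rw [huw, hsome] at hu'
            exact hmm' (Option.some_injective _ hu').symm
          · exact hunm u (by rwa [Function.update_of_ne huw])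
    · -- w rejects m, keeps m'
      rw [heq]
      have hm'm : m' ≠ m := fun h => hu w (h ▸ hsome)
      have hm'_rank : s.next m' = ((P.M m').symm w : ℕ) + 1 := h1 m' w hsome
      intro m₀
      dsimp only
      by_cases hmm : m₀ = m
      · subst hmm
        rw [Function.update_self]
        -- show ν m₀ ≠ w, hence s.next m₀ < rank (ν m₀), i.e. +1 still ≤
        have hnu : ν m₀ ≠ w := by
          intro hnu
          -- (m', w) blocks ν
          apply hnb m' w
          have hm'bound := (hs ν ⟨hbij, hnb⟩ m').1
          refine ⟨?_, m₀, hnu, ?_⟩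
          · show ((P.M m').symm w : ℕ) < ((P.M m').symm (ν m') : ℕ)
            have hne : ν m' ≠ w := by
              intro h
              exact hm'm (hbij.1 (h.trans hnu.symm))
            have : ((P.M m').symm (ν m') : ℕ) ≠ ((P.M m').symm w : ℕ) :=
              fun h => hne ((P.M m').symm.injective (Fin.ext h))
            omega
          · show ((P.W w).symm m' : ℕ) < ((P.W w).symm m₀ : ℕ)
            have : (P.W w).symm m' ≠ (P.W w).symm m₀ :=
              fun h => hm'm ((P.W w).symm.injective h)
            have : ((P.W w).symm m' : ℕ) ≠ ((P.W w).symm m₀ : ℕ) := fun h => this (Fin.ext h)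
            omega
        have : ((P.M m₀).symm (ν m₀) : ℕ) ≠ ((P.M m₀).symm w : ℕ) :=
          fun h => hnu ((P.M m₀).symm.injective (Fin.ext h))
        constructor <;> omega
      · rw [Function.update_of_ne hmm]
        exact hs ν ⟨hbij, hnb⟩ m₀

lemma GSrun_optinv (P : Profile n) : OptInv P (GSrun P) := by
  unfold GSrun
  induction n * n + 1 with
  | zero => exact OptInv_init P
  | succ k ih =>
    rw [Function.iterate_succ_apply']
    exact OptInv_step P (GSiter_inv P k) ih

/-- men-optimality of deferred acceptance -/
lemma DA_optimal (P : Profile n) {ν : Fin n → Fin n} (hν : Stable P ν) (m : Fin n) :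
    ((P.M m).symm (DA P m) : ℕ) ≤ ((P.M m).symm (ν m) : ℕ) := by
  have h1 := (GSrun_inv P).2.1 m (DA P m) (DA_spec P m)
  have h2 := (GSrun_optinv P ν hν m).1
  omega
theorem weak_pushUp_no_change' (n : ℕ) (P : Profile n) (m : Fin n)
    (X : Set (Fin n)) (hX : X ⊆ Below (P.M m) (DA P m))
    (e' : Fin n ≃ Fin n) (hpu : PushUp P m X e')
    (hnr : DA (P.updateM m e') m = DA P m)
    (hpref : ∀ w' ∈ X, ∀ m' : Fin n, DA P m' = w' → P.wpref w' m' m) :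
    DA (P.updateM m e') = DA P := by
  set P' := P.updateM m e' with hP'
  have hMm : P'.M m = e' := by
    rw [hP']; unfold Profile.updateM; exact Function.update_self _ _ _
  have hMne : ∀ m₀, m₀ ≠ m → P'.M m₀ = P.M m₀ := by
    intro m₀ h
    rw [hP']; unfold Profile.updateM; exact Function.update_of_ne h _ _
  have hWeq : P'.W = P.W := rfl
  have hab : Above e' (DA P m) = Above (P.M m) (DA P m) ∪ X := by
    have h := hpu
    unfold PushUp PushUpDown at h
    rwa [Set.diff_empty] at h
  -- DA P' is stable w.r.t. P
  have hμ'P : Stable P (DA P') := by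
    refine ⟨DA_bij P', ?_⟩
    rintro m₀ w ⟨hmp, m₁, hm₁, hwp⟩
    apply (DA_stable P').2 m₀ w
    refine ⟨?_, m₁, hm₁, hwp⟩
    by_cases h : m₀ = m
    · subst h
      have hw_ab : w ∈ Above (P.M m₀) (DA P m₀) := by
        show (P.M m₀).symm w < (P.M m₀).symm (DA P m₀)
        rw [← hnr]; exact hmp
      have : w ∈ Above e' (DA P m₀) := by
        rw [hab]; exact Or.inl hw_ab
      show (P'.M m₀).symm w < (P'.M m₀).symm (DA P' m₀)
      rw [hMm, hnr]
      exact this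
    · show (P'.M m₀).symm w < (P'.M m₀).symm (DA P' m₀)
      rw [hMne m₀ h]
      exact hmp
  -- DA P is stable w.r.t. P'
  have hμP' : Stable P' (DA P) := by
    refine ⟨DA_bij P, ?_⟩
    rintro m₀ w ⟨hmp, m₁, hm₁, hwp⟩
    by_cases h : m₀ = m
    · subst h
      have : w ∈ Above e' (DA P m₀) := by
        show e'.symm w < e'.symm (DA P m₀)
        rw [← hMm]; exact hmp
      rw [hab] at this
      rcases this with hup | hx
      · exact (DA_stable P).2 m₀ w ⟨hup, m₁, hm₁, hwp⟩
      · have h1 : P.wpref w m₁ m₀ := hpref w hx m₁ hm₁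
        have h2 : P.wpref w m₀ m₁ := hwp
        exact absurd h2 (lt_asymm h1)
    · apply (DA_stable P).2 m₀ w
      refine ⟨?_, m₁, hm₁, hwp⟩
      show (P.M m₀).symm w < (P.M m₀).symm (DA P m₀)
      rw [← hMne m₀ h]
      exact hmp
  funext m₀
  by_cases h : m₀ = m
  · subst h; exact hnr
  · have o1 := DA_optimal P hμ'P m₀
    have o2 := DA_optimal P' hμP' m₀
    rw [hMne m₀ h] at o2
    have : ((P.M m₀).symm (DA P' m₀) : ℕ) = ((P.M m₀).symm (DA P m₀) : ℕ) := le_antisymm o2 o1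
    exact (P.M m₀).symm.injective (Fin.ext this)
/-- If `m` pushes up a set `X` without regret and every woman in `X`
strictly prefers her original DA partner to `m`, then the DA matching is unchanged. -/
theorem weak_pushUp_no_change (n : ℕ) (P : Profile n) (m : Fin n)
    (X : Set (Fin n)) (hX : X ⊆ Below (P.M m) (DA P m))
    (e' : Fin n ≃ Fin n) (hpu : PushUp P m X e')
    (hnr : DA (P.updateM m e') m = DA P m)
    (hpref : ∀ w' ∈ X, ∀ m' : Fin n, DA P m' = w' → P.wpref w' m' m) :
    DA (P.updateM m e') = DA P := by
  exact weak_pushUp_no_change' n P m X hX e' hpu hnr hpref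
end
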